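/- (Lie–Trotter product formula for matrices.) Let A and B be N × N complex matrices. Then exp(A + B) = lim_{s → ∞} (exp(A/s) · exp(B/s))^s, where the limit is taken over s ∈ ℕ tending to infinity, with convergence in any matrix norm. -/

import Mathlib

open Matrix Filter

/-! With `T = exp(a/n) exp(b/n)` and `S = exp((a+b)/n)` one has `Sⁿ = exp(a+b)`, and telescoping
gives `‖Tⁿ - Sⁿ‖ ≤ n Mⁿ ‖T - S‖` with `Mⁿ = exp(‖a‖ + ‖b‖)`. The map
`t ↦ exp(ta) exp(tb) - exp(t(a+b))` vanishes at `0` together with its derivative, so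
`‖T - S‖ = o(1/n)` and the bound tends to `0`. -/

open NormedSpace Asymptotics Topology

theorem norm_pow_sub_pow_le {𝔸 : Type*} [NormedRing 𝔸] [NormOneClass 𝔸] {u v : 𝔸} {M : ℝ}
    (hu : ‖u‖ ≤ M) (hv : ‖v‖ ≤ M) (hM : 1 ≤ M) (n : ℕ) :
    ‖u ^ n - v ^ n‖ ≤ n * M ^ n * ‖u - v‖ := by
  induction n with
  | zero => simp
  | succ n ih =>
    have hun : ‖u ^ n‖ ≤ M ^ n := (norm_pow_le u n).trans (by gcongr)
    have hMn : M ^ n ≤ M ^ n * M := le_mul_of_one_le_right (by positivity) hM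
    calc ‖u ^ (n + 1) - v ^ (n + 1)‖ = ‖u ^ n * (u - v) + (u ^ n - v ^ n) * v‖ := by
          congr 1; noncomm_ring
      _ ≤ M ^ n * ‖u - v‖ + n * M ^ n * ‖u - v‖ * M := by
          refine (norm_add_le _ _).trans (add_le_add ((norm_mul_le _ _).trans ?_)
            ((norm_mul_le _ _).trans ?_)) <;> gcongr
      _ ≤ (n + 1 : ℕ) * M ^ (n + 1) * ‖u - v‖ := by
          push_cast
          rw [pow_succ]
          nlinarith [norm_nonneg (u - v), mul_le_mul_of_nonneg_right hMn (norm_nonneg (u - v))]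

theorem norm_exp_le_exp_norm (𝕂 : Type*) {𝔸 : Type*} [RCLike 𝕂] [NormedRing 𝔸] [NormedAlgebra 𝕂 𝔸]
    [CompleteSpace 𝔸] [NormOneClass 𝔸] (x : 𝔸) : ‖exp x‖ ≤ Real.exp ‖x‖ := by
  rw [exp_eq_tsum 𝕂, Real.exp_eq_exp_ℝ, exp_eq_tsum_div]
  refine (norm_tsum_le_tsum_norm (norm_expSeries_summable' x)).trans <|
    (norm_expSeries_summable' x).tsum_le_tsum (fun n => ?_) (Real.summable_pow_div_factorial _)
  rw [norm_smul, norm_inv, RCLike.norm_natCast, ← div_eq_inv_mul]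
  gcongr
  exact norm_pow_le x n

section
variable {𝕂 𝔸 : Type*} [RCLike 𝕂] [NormedRing 𝔸] [NormedAlgebra 𝕂 𝔸] [CompleteSpace 𝔸]

theorem isLittleO_exp_smul_mul_exp_smul_sub_exp_smul (a b : 𝔸) :
    (fun t : 𝕂 => exp (t • a) * exp (t • b) - exp (t • (a + b))) =o[𝓝 0] fun t => t := by
  have hderiv : HasDerivAt (fun t : 𝕂 => exp (t • a) * exp (t • b) - exp (t • (a + b))) 0 0 := by
    simpa using ((hasDerivAt_exp_smul_const a (0 : 𝕂)).fun_mul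
      (hasDerivAt_exp_smul_const b 0)).fun_sub (hasDerivAt_exp_smul_const (a + b) 0)
  simpa only [zero_add, zero_smul, smul_zero, exp_zero, mul_one, sub_self, sub_zero] using
    hasDerivAt_iff_isLittleO_nhds_zero.mp hderiv

theorem norm_exp_smul_mul_exp_smul_pow_sub_exp_le [NormOneClass 𝔸] (a b : 𝔸) {n : ℕ}
    (hn : n ≠ 0) :
    ‖(exp ((n : 𝕂)⁻¹ • a) * exp ((n : 𝕂)⁻¹ • b)) ^ n - exp (a + b)‖ ≤
      Real.exp (‖a‖ + ‖b‖) *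
        (n * ‖exp ((n : 𝕂)⁻¹ • a) * exp ((n : 𝕂)⁻¹ • b) - exp ((n : 𝕂)⁻¹ • (a + b))‖) := by
  have hnorm : ∀ x : 𝔸, ‖(n : 𝕂)⁻¹ • x‖ = ‖x‖ / n := fun x => by
    rw [norm_smul, norm_inv, RCLike.norm_natCast, inv_mul_eq_div]
  have hT : ‖exp ((n : 𝕂)⁻¹ • a) * exp ((n : 𝕂)⁻¹ • b)‖ ≤ Real.exp ((‖a‖ + ‖b‖) / n) := by
    refine (norm_mul_le _ _).trans ?_
    rw [add_div, Real.exp_add, ← hnorm, ← hnorm]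
    gcongr <;> exact norm_exp_le_exp_norm 𝕂 _
  have hS : ‖exp ((n : 𝕂)⁻¹ • (a + b))‖ ≤ Real.exp ((‖a‖ + ‖b‖) / n) :=
    (norm_exp_le_exp_norm 𝕂 _).trans (Real.exp_le_exp.mpr ((hnorm _).trans_le
      (by gcongr; exact norm_add_le a b)))
  have hM : 1 ≤ Real.exp ((‖a‖ + ‖b‖) / n) := Real.one_le_exp (by positivity)
  have hMn : Real.exp ((‖a‖ + ‖b‖) / n) ^ n = Real.exp (‖a‖ + ‖b‖) := by
    rw [← Real.exp_nat_mul, mul_div_cancel₀ _ (Nat.cast_ne_zero.mpr hn)]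
  have hSn : exp ((n : 𝕂)⁻¹ • (a + b)) ^ n = exp (a + b) := by
    let _ := NormedAlgebra.restrictScalars ℚ 𝕂 𝔸
    rw [← NormedSpace.exp_nsmul, ← Nat.cast_smul_eq_nsmul 𝕂, smul_smul,
      mul_inv_cancel₀ (Nat.cast_ne_zero.mpr hn), one_smul]
  rw [← hSn, ← hMn, ← mul_assoc, mul_comm (Real.exp _ ^ n)]
  exact norm_pow_sub_pow_le hT hS hM n

theorem tendsto_exp_smul_mul_exp_smul_pow [NormOneClass 𝔸] (a b : 𝔸) :
    Tendsto (fun n : ℕ => (exp ((n : 𝕂)⁻¹ • a) * exp ((n : 𝕂)⁻¹ • b)) ^ n) atTop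
      (𝓝 (exp (a + b))) := by
  have hlo := (isLittleO_exp_smul_mul_exp_smul_sub_exp_smul (𝕂 := 𝕂) a b).comp_tendsto
    (tendsto_inv_atTop_nhds_zero_nat (𝕜 := 𝕂))
  have hlim : Tendsto (fun n : ℕ => (n : ℝ) *
      ‖exp ((n : 𝕂)⁻¹ • a) * exp ((n : 𝕂)⁻¹ • b) - exp ((n : 𝕂)⁻¹ • (a + b))‖) atTop (𝓝 0) := by
    refine hlo.norm_norm.tendsto_div_nhds_zero.congr fun n => ?_
    simp [div_inv_eq_mul, mul_comm]
  rw [tendsto_iff_norm_sub_tendsto_zero]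
  refine squeeze_zero' (Eventually.of_forall fun _ => norm_nonneg _) ?_
    (by simpa only [mul_zero] using hlim.const_mul (Real.exp (‖a‖ + ‖b‖)))
  filter_upwards [eventually_ne_atTop 0] with n hn
  exact norm_exp_smul_mul_exp_smul_pow_sub_exp_le (𝕂 := 𝕂) a b hn

end

/-- Lie–Trotter product formula for matrices: for `N × N` complex matrices `A` and `B`,
`exp(A + B) = lim_{s → ∞} (exp(A/s) · exp(B/s))^s`, the limit being over `s ∈ ℕ`. -/
theorem lie_trotter_product_formula (N : ℕ) (A B : Matrix (Fin N) (Fin N) ℂ) :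
    Tendsto
      (fun s : ℕ =>
        (NormedSpace.exp ((s : ℂ)⁻¹ • A) * NormedSpace.exp ((s : ℂ)⁻¹ • B)) ^ s)
      atTop (nhds (NormedSpace.exp (A + B))) := by
  rcases isEmpty_or_nonempty (Fin N) with _ | _
  · exact tendsto_const_nhds.congr fun s => Subsingleton.elim _ _
  -- the `L∞` operator norm induces the entrywise topology used in the statement
  let _ := Matrix.linftyOpNormedRing (n := Fin N) (α := ℂ)
  let _ := Matrix.linftyOpNormedAlgebra (n := Fin N) (R := ℂ) (α := ℂ)
  exact tendsto_exp_smul_mul_exp_smul_pow (𝕂 := ℂ) A B
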